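/- arXiv:2201.04266 — 2 statements merged into one kernel-verified Lean document; each statement's English description precedes it below -/
import Mathlib

section
/- Let G be a two-player finite strategic-form game and G' the auxiliary four-player game defined as follows: players 1 and 2 of G' have pure strategy set S₁, players 3 and 4 have pure strategy set S₂, and utilities u'₁(s₁,s₂,s₃,s₄) = −ε₂u₂(s₁,s₃) − (1−ε₂)u₂(s₁,s₄), u'₂ = ε₂u₁(s₂,s₃) + (1−ε₂)u₁(s₂,s₄), u'₃ = −ε₁u₁(s₁,s₃) − (1−ε₁)u₁(s₂,s₃), u'₄ = ε₁u₂(s₁,s₄) + (1−ε₁)u₂(s₂,s₄). Then every Nash equilibrium (τ₁, ρ₁, τ₂, ρ₂) of G' yields an ε-safe equilibrium of G via σᵢ = εᵢτᵢ + (1−εᵢ)ρᵢ. -/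
open Finset

/-- Expected utility in a two-player strategic-form game, extended bilinearly. -/
def EU {S1 S2 : Type*} [Fintype S1] [Fintype S2] (u : S1 → S2 → ℝ)
    (σ1 : S1 → ℝ) (σ2 : S2 → ℝ) : ℝ :=
  ∑ a : S1, ∑ b : S2, σ1 a * σ2 b * u a b

/-- `(σ1, σ2)` is an `(ε1, ε2)`-safe equilibrium of the two-player game `(u1, u2)`. -/
def IsSafeEq {S1 S2 : Type*} [Fintype S1] [Fintype S2]
    (u1 u2 : S1 → S2 → ℝ) (ε1 ε2 : ℝ) (σ1 : S1 → ℝ) (σ2 : S2 → ℝ) : Prop :=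
  ∃ τ1 ρ1 : S1 → ℝ, ∃ τ2 ρ2 : S2 → ℝ,
    τ1 ∈ stdSimplex ℝ S1 ∧ ρ1 ∈ stdSimplex ℝ S1 ∧
    τ2 ∈ stdSimplex ℝ S2 ∧ ρ2 ∈ stdSimplex ℝ S2 ∧
    σ1 = (fun s => ε1 * τ1 s + (1 - ε1) * ρ1 s) ∧
    σ2 = (fun s => ε2 * τ2 s + (1 - ε2) * ρ2 s) ∧
    (∀ σ ∈ stdSimplex ℝ S1, EU u1 σ σ2 ≤ EU u1 ρ1 σ2) ∧
    (∀ σ ∈ stdSimplex ℝ S1, EU u2 τ1 σ2 ≤ EU u2 σ σ2) ∧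
    (∀ σ ∈ stdSimplex ℝ S2, EU u2 σ1 σ ≤ EU u2 σ1 ρ2) ∧
    (∀ σ ∈ stdSimplex ℝ S2, EU u1 σ1 τ2 ≤ EU u1 σ1 σ)

/-- `(σ1, σ2)` is a Nash equilibrium of the two-player game `(u1, u2)`. -/
def IsNash {S1 S2 : Type*} [Fintype S1] [Fintype S2]
    (u1 u2 : S1 → S2 → ℝ) (σ1 : S1 → ℝ) (σ2 : S2 → ℝ) : Prop :=
  σ1 ∈ stdSimplex ℝ S1 ∧ σ2 ∈ stdSimplex ℝ S2 ∧
  (∀ σ ∈ stdSimplex ℝ S1, EU u1 σ σ2 ≤ EU u1 σ1 σ2) ∧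
  (∀ σ ∈ stdSimplex ℝ S2, EU u2 σ1 σ ≤ EU u2 σ1 σ2)

/-- Expected utility in a four-player strategic-form game. -/
def EU4 {A B C D : Type*} [Fintype A] [Fintype B] [Fintype C] [Fintype D]
    (u : A → B → C → D → ℝ) (pa : A → ℝ) (pb : B → ℝ) (pc : C → ℝ) (pd : D → ℝ) : ℝ :=
  ∑ a : A, ∑ b : B, ∑ c : C, ∑ d : D, pa a * pb b * pc c * pd d * u a b c d

/-! In `G'`, the payoff of player 2 from `p` against `(τ₁, τ₂, ρ₂)` is exactly `u₁(p, σ₂)`: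
`u'₂` ignores `s₁` and weighs `s₃`, `s₄` by `ε₂`, `1 - ε₂`. In the same way the payoffs of
players 1, 3, 4 are `-u₂(p, σ₂)`, `-u₁(σ₁, p)` and `u₂(σ₁, p)`, so the four Nash conditions
of `G'` are literally the four conditions of an `ε`-safe equilibrium of `G`. -/

section ExpectedUtility

variable {A B C D : Type*} [Fintype A] [Fintype B] [Fintype C] [Fintype D]

lemma EU_eq_sum_mul_sum (u : A → B → ℝ) (p : A → ℝ) (q : B → ℝ) :
    EU u p q = ∑ a, p a * ∑ b, q b * u a b := by
  simp only [EU, Finset.mul_sum, mul_assoc]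

lemma EU_of_left {q : B → ℝ} (hq : ∑ b, q b = 1) (g : A → ℝ) (p : A → ℝ) :
    EU (fun a _ => g a) p q = ∑ a, p a * g a := by
  simp only [EU_eq_sum_mul_sum, ← Finset.sum_mul, hq, one_mul]

lemma EU_of_right {p : A → ℝ} (hp : ∑ a, p a = 1) (g : B → ℝ) (q : B → ℝ) :
    EU (fun _ b => g b) p q = ∑ b, q b * g b := by
  simp only [EU_eq_sum_mul_sum, ← Finset.sum_mul, hp, one_mul]

lemma EU_mix_left (u : A → B → ℝ) (q : B → ℝ) (x y : ℝ) (τ ρ : A → ℝ) :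
    EU u (fun s => x * τ s + y * ρ s) q = x * EU u τ q + y * EU u ρ q := by
  simp only [EU, Finset.mul_sum, ← Finset.sum_add_distrib]
  exact Finset.sum_congr rfl fun a _ => Finset.sum_congr rfl fun b _ => by ring

lemma EU_mix_right (u : A → B → ℝ) (p : A → ℝ) (x y : ℝ) (τ ρ : B → ℝ) :
    EU u p (fun s => x * τ s + y * ρ s) = x * EU u p τ + y * EU u p ρ := by
  simp only [EU, Finset.mul_sum, ← Finset.sum_add_distrib]
  exact Finset.sum_congr rfl fun a _ => Finset.sum_congr rfl fun b _ => by ring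

lemma EU4_eq_EU_EU (u : A → B → C → D → ℝ) (pa : A → ℝ) (pb : B → ℝ) (pc : C → ℝ)
    (pd : D → ℝ) : EU4 u pa pb pc pd = EU (fun a b => EU (u a b) pc pd) pa pb := by
  simp only [EU4, EU, Finset.mul_sum, mul_assoc]

variable {pa : A → ℝ} {pb : B → ℝ} {pc : C → ℝ} {pd : D → ℝ}

lemma EU4_mul_add_mul (x y : ℝ) (u v : A → B → C → D → ℝ) :
    EU4 (fun a b c d => x * u a b c d + y * v a b c d) pa pb pc pd
      = x * EU4 u pa pb pc pd + y * EU4 v pa pb pc pd := by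
  simp only [EU4, Finset.mul_sum, ← Finset.sum_add_distrib]
  exact Finset.sum_congr rfl fun a _ => Finset.sum_congr rfl fun b _ =>
    Finset.sum_congr rfl fun c _ => Finset.sum_congr rfl fun d _ => by ring

lemma EU4_neg_mul_sub_mul (x y : ℝ) (u v : A → B → C → D → ℝ) :
    EU4 (fun a b c d => -(x * u a b c d) - y * v a b c d) pa pb pc pd
      = -(x * EU4 u pa pb pc pd) - y * EU4 v pa pb pc pd := by
  have h : (fun a b c d => -(x * u a b c d) - y * v a b c d)
      = fun a b c d => -x * u a b c d + -y * v a b c d := by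
    funext a b c d; ring
  rw [h, EU4_mul_add_mul]
  ring

lemma EU4_of_ac (hb : ∑ b, pb b = 1) (hd : ∑ d, pd d = 1) (f : A → C → ℝ) :
    EU4 (fun a _ c _ => f a c) pa pb pc pd = EU f pa pc := by
  simp only [EU4_eq_EU_EU, EU_of_left hd, EU_of_left hb, EU_eq_sum_mul_sum]

lemma EU4_of_ad (hb : ∑ b, pb b = 1) (hc : ∑ c, pc c = 1) (f : A → D → ℝ) :
    EU4 (fun a _ _ d => f a d) pa pb pc pd = EU f pa pd := by
  simp only [EU4_eq_EU_EU, EU_of_right hc, EU_of_left hb, EU_eq_sum_mul_sum]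

lemma EU4_of_bc (ha : ∑ a, pa a = 1) (hd : ∑ d, pd d = 1) (f : B → C → ℝ) :
    EU4 (fun _ b c _ => f b c) pa pb pc pd = EU f pb pc := by
  simp only [EU4_eq_EU_EU, EU_of_left hd, EU_of_right ha, EU_eq_sum_mul_sum]

lemma EU4_of_bd (ha : ∑ a, pa a = 1) (hc : ∑ c, pc c = 1) (f : B → D → ℝ) :
    EU4 (fun _ b _ d => f b d) pa pb pc pd = EU f pb pd := by
  simp only [EU4_eq_EU_EU, EU_of_right hc, EU_of_right ha, EU_eq_sum_mul_sum]

end ExpectedUtility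

theorem aux_game_nash_gives_safeEq_general
    {S1 S2 : Type*} [Fintype S1] [Fintype S2]
    (u1 u2 : S1 → S2 → ℝ) (ε1 ε2 : ℝ)
    (u'1 u'2 : S1 → S1 → S2 → S2 → ℝ) (u'3 u'4 : S1 → S1 → S2 → S2 → ℝ)
    (hu1 : u'1 = fun s1 _s2 s3 s4 => -(ε2 * u2 s1 s3) - (1 - ε2) * u2 s1 s4)
    (hu2 : u'2 = fun _s1 s2 s3 s4 => ε2 * u1 s2 s3 + (1 - ε2) * u1 s2 s4)
    (hu3 : u'3 = fun s1 s2 s3 _s4 => -(ε1 * u1 s1 s3) - (1 - ε1) * u1 s2 s3)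
    (hu4 : u'4 = fun s1 s2 _s3 s4 => ε1 * u2 s1 s4 + (1 - ε1) * u2 s2 s4)
    (τ1 ρ1 : S1 → ℝ) (τ2 ρ2 : S2 → ℝ)
    (hτ1 : τ1 ∈ stdSimplex ℝ S1) (hρ1 : ρ1 ∈ stdSimplex ℝ S1)
    (hτ2 : τ2 ∈ stdSimplex ℝ S2) (hρ2 : ρ2 ∈ stdSimplex ℝ S2)
    -- Nash equilibrium conditions in G'
    (hN1 : ∀ p ∈ stdSimplex ℝ S1, EU4 u'1 p ρ1 τ2 ρ2 ≤ EU4 u'1 τ1 ρ1 τ2 ρ2)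
    (hN2 : ∀ p ∈ stdSimplex ℝ S1, EU4 u'2 τ1 p τ2 ρ2 ≤ EU4 u'2 τ1 ρ1 τ2 ρ2)
    (hN3 : ∀ p ∈ stdSimplex ℝ S2, EU4 u'3 τ1 ρ1 p ρ2 ≤ EU4 u'3 τ1 ρ1 τ2 ρ2)
    (hN4 : ∀ p ∈ stdSimplex ℝ S2, EU4 u'4 τ1 ρ1 τ2 p ≤ EU4 u'4 τ1 ρ1 τ2 ρ2) :
    IsSafeEq u1 u2 ε1 ε2
      (fun s => ε1 * τ1 s + (1 - ε1) * ρ1 s)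
      (fun s => ε2 * τ2 s + (1 - ε2) * ρ2 s) := by
  set σ1 := fun s => ε1 * τ1 s + (1 - ε1) * ρ1 s
  set σ2 := fun s => ε2 * τ2 s + (1 - ε2) * ρ2 s
  have payoff1 (p : S1 → ℝ) : EU4 u'1 p ρ1 τ2 ρ2 = -EU u2 p σ2 := by
    rw [hu1, EU4_neg_mul_sub_mul, EU4_of_ac hρ1.2 hρ2.2, EU4_of_ad hρ1.2 hτ2.2, EU_mix_right]
    ring
  have payoff2 (p : S1 → ℝ) : EU4 u'2 τ1 p τ2 ρ2 = EU u1 p σ2 := by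
    rw [hu2, EU4_mul_add_mul, EU4_of_bc hτ1.2 hρ2.2, EU4_of_bd hτ1.2 hτ2.2, EU_mix_right]
  have payoff3 (p : S2 → ℝ) : EU4 u'3 τ1 ρ1 p ρ2 = -EU u1 σ1 p := by
    rw [hu3, EU4_neg_mul_sub_mul, EU4_of_ac hρ1.2 hρ2.2, EU4_of_bc hτ1.2 hρ2.2, EU_mix_left]
    ring
  have payoff4 (p : S2 → ℝ) : EU4 u'4 τ1 ρ1 τ2 p = EU u2 σ1 p := by
    rw [hu4, EU4_mul_add_mul, EU4_of_ad hρ1.2 hτ2.2, EU4_of_bd hτ1.2 hτ2.2, EU_mix_left]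
  refine ⟨τ1, ρ1, τ2, ρ2, hτ1, hρ1, hτ2, hρ2, rfl, rfl, fun σ hσ => ?_, fun σ hσ => ?_,
    fun σ hσ => ?_, fun σ hσ => ?_⟩
  · simpa only [payoff2] using hN2 σ hσ
  · simpa only [payoff1, neg_le_neg_iff] using hN1 σ hσ
  · simpa only [payoff4] using hN4 σ hσ
  · simpa only [payoff3, neg_le_neg_iff] using hN3 σ hσ

/-- every Nash equilibrium (τ₁, ρ₁, τ₂, ρ₂) of the auxiliary
four-player game G' yields an ε-safe equilibrium of G via σᵢ = εᵢτᵢ + (1−εᵢ)ρᵢ. -/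
theorem aux_game_nash_gives_safeEq
    {S1 S2 : Type*} [Fintype S1] [Fintype S2]
    (u1 u2 : S1 → S2 → ℝ) (ε1 ε2 : ℝ)
    (hε1 : ε1 ∈ Set.Icc (0:ℝ) 1) (hε2 : ε2 ∈ Set.Icc (0:ℝ) 1)
    (u'1 u'2 : S1 → S1 → S2 → S2 → ℝ) (u'3 u'4 : S1 → S1 → S2 → S2 → ℝ)
    (hu1 : u'1 = fun s1 _s2 s3 s4 => -(ε2 * u2 s1 s3) - (1 - ε2) * u2 s1 s4)
    (hu2 : u'2 = fun _s1 s2 s3 s4 => ε2 * u1 s2 s3 + (1 - ε2) * u1 s2 s4)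
    (hu3 : u'3 = fun s1 s2 s3 _s4 => -(ε1 * u1 s1 s3) - (1 - ε1) * u1 s2 s3)
    (hu4 : u'4 = fun s1 s2 _s3 s4 => ε1 * u2 s1 s4 + (1 - ε1) * u2 s2 s4)
    (τ1 ρ1 : S1 → ℝ) (τ2 ρ2 : S2 → ℝ)
    (hτ1 : τ1 ∈ stdSimplex ℝ S1) (hρ1 : ρ1 ∈ stdSimplex ℝ S1)
    (hτ2 : τ2 ∈ stdSimplex ℝ S2) (hρ2 : ρ2 ∈ stdSimplex ℝ S2)
    -- Nash equilibrium conditions in G'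
    (hN1 : ∀ p ∈ stdSimplex ℝ S1, EU4 u'1 p ρ1 τ2 ρ2 ≤ EU4 u'1 τ1 ρ1 τ2 ρ2)
    (hN2 : ∀ p ∈ stdSimplex ℝ S1, EU4 u'2 τ1 p τ2 ρ2 ≤ EU4 u'2 τ1 ρ1 τ2 ρ2)
    (hN3 : ∀ p ∈ stdSimplex ℝ S2, EU4 u'3 τ1 ρ1 p ρ2 ≤ EU4 u'3 τ1 ρ1 τ2 ρ2)
    (hN4 : ∀ p ∈ stdSimplex ℝ S2, EU4 u'4 τ1 ρ1 τ2 p ≤ EU4 u'4 τ1 ρ1 τ2 ρ2) :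
    IsSafeEq u1 u2 ε1 ε2
      (fun s => ε1 * τ1 s + (1 - ε1) * ρ1 s)
      (fun s => ε2 * τ2 s + (1 - ε2) * ρ2 s) :=
  aux_game_nash_gives_safeEq_general u1 u2 ε1 ε2 u'1 u'2 u'3 u'4 hu1 hu2 hu3 hu4 τ1 ρ1 τ2 ρ2 hτ1 hρ1
    hτ2 hρ2 hN1 hN2 hN3 hN4
end

section
/- In the game of Chicken with ε₁ = 0 and any ε₂ ∈ [0, 0.1], the profile in which player 1 plays the Nash equilibrium strategy (swerve with probability 0.9) is part of an ε-safe equilibrium; i.e., there exists an ε-safe equilibrium in which player 1 swerves with probability 0.9. -/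
open Finset

/-- Row player payoffs in Chicken: strategy 0 = swerve, 1 = straight. -/
def chickenU1 : Fin 2 → Fin 2 → ℝ := fun a b => !![(0:ℝ), -1; 1, -10] a b

/-- Column player payoffs in Chicken. -/
def chickenU2 : Fin 2 → Fin 2 → ℝ := fun a b => !![(0:ℝ), 1; -1, -10] a b

/-!
The profile `(9/10, 1/10)` is the mixed Nash equilibrium of Chicken and leaves both players
indifferent. With `ε₁ = 0` player 1 simply plays it. Against it, player 2's malicious part `τ₂`
is "straight", which hurts player 1 most, and the rational part
`ρ₂ = (σ₂ - ε₂ δ_straight) / (1 - ε₂)` is a probability vector exactly when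
`ε₂ ≤ σ₂ straight = 1/10`; it is a best reply because player 2 is indifferent against `σ₁`.
-/

theorem eq_mix_residual {ι : Type*} [DecidableEq ι] (σ : ι → ℝ) (b : ι) {ε : ℝ} (hε1 : ε ≠ 1) :
    σ = fun s => ε * (Pi.single b 1 : ι → ℝ) s +
      (1 - ε) * ((σ s - ε * (Pi.single b 1 : ι → ℝ) s) / (1 - ε)) := by
  have : 1 - ε ≠ 0 := sub_ne_zero.2 hε1.symm
  funext s
  rw [mul_div_cancel₀ _ this]
  ring

section Mixing

variable {ι : Type*} [Fintype ι]

theorem le_sum_mul_of_mem_stdSimplex {w f : ι → ℝ} {c : ℝ} (hw : w ∈ stdSimplex ℝ ι)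
    (h : ∀ i, c ≤ f i) : c ≤ ∑ i, w i * f i :=
  calc c = ∑ i, w i * c := by rw [← sum_mul, hw.2, one_mul]
    _ ≤ ∑ i, w i * f i := sum_le_sum fun i _ => mul_le_mul_of_nonneg_left (h i) (hw.1 i)

theorem sum_mul_eq_of_mem_stdSimplex {w f : ι → ℝ} {c : ℝ} (hw : w ∈ stdSimplex ℝ ι)
    (h : ∀ i, f i = c) : ∑ i, w i * f i = c := by
  simp only [h, ← sum_mul, hw.2, one_mul]

theorem sum_single_mul [DecidableEq ι] (i : ι) (f : ι → ℝ) :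
    ∑ j, (Pi.single i 1 : ι → ℝ) j * f j = f i := by
  simp [Pi.single_apply]

theorem residual_mem_stdSimplex [DecidableEq ι] {σ : ι → ℝ} (hσ : σ ∈ stdSimplex ℝ ι) {b : ι}
    {ε : ℝ} (hε : ε ≤ σ b) (hε1 : ε < 1) :
    (fun s => (σ s - ε * (Pi.single b 1 : ι → ℝ) s) / (1 - ε)) ∈ stdSimplex ℝ ι := by
  have hpos : 0 < 1 - ε := sub_pos.2 hε1
  refine ⟨fun s => div_nonneg ?_ hpos.le, ?_⟩
  · rcases eq_or_ne s b with rfl | hs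
    · simpa using hε
    · simpa [hs] using hσ.1 s
  · rw [← sum_div, sum_sub_distrib, hσ.2, ← mul_sum, Finset.sum_pi_single']
    simp only [mem_univ, if_true, mul_one]
    exact div_self hpos.ne'

end Mixing

section Games

variable {S1 S2 : Type*} [Fintype S1] [Fintype S2] {u u1 u2 : S1 → S2 → ℝ}

theorem EU_eq_sum_left (u : S1 → S2 → ℝ) (σ1 : S1 → ℝ) (σ2 : S2 → ℝ) :
    EU u σ1 σ2 = ∑ a, σ1 a * ∑ b, σ2 b * u a b := by
  refine sum_congr rfl fun a _ => ?_
  rw [mul_sum]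
  exact sum_congr rfl fun b _ => by ring

theorem EU_eq_sum_right (u : S1 → S2 → ℝ) (σ1 : S1 → ℝ) (σ2 : S2 → ℝ) :
    EU u σ1 σ2 = ∑ b, σ2 b * ∑ a, σ1 a * u a b := by
  rw [EU, sum_comm]
  refine sum_congr rfl fun b _ => ?_
  rw [mul_sum]
  exact sum_congr rfl fun a _ => by ring

theorem isNash_of_indifferent {σ1 : S1 → ℝ} {σ2 : S2 → ℝ} {c1 c2 : ℝ}
    (hσ1 : σ1 ∈ stdSimplex ℝ S1) (hσ2 : σ2 ∈ stdSimplex ℝ S2)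
    (h1 : ∀ a, ∑ b, σ2 b * u1 a b = c1) (h2 : ∀ b, ∑ a, σ1 a * u2 a b = c2) :
    IsNash u1 u2 σ1 σ2 := by
  refine ⟨hσ1, hσ2, fun σ hσ => ?_, fun σ hσ => ?_⟩
  · simp only [EU_eq_sum_left, sum_mul_eq_of_mem_stdSimplex hσ h1,
      sum_mul_eq_of_mem_stdSimplex hσ1 h1, le_refl]
  · simp only [EU_eq_sum_right, sum_mul_eq_of_mem_stdSimplex hσ h2,
      sum_mul_eq_of_mem_stdSimplex hσ2 h2, le_refl]

theorem EU_single_left_le [DecidableEq S1] {σ : S1 → ℝ} {σ2 : S2 → ℝ} {a : S1}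
    (hσ : σ ∈ stdSimplex ℝ S1)
    (h : ∀ a', ∑ b, σ2 b * u a b ≤ ∑ b, σ2 b * u a' b) :
    EU u (Pi.single a 1) σ2 ≤ EU u σ σ2 := by
  rw [EU_eq_sum_left, EU_eq_sum_left, sum_single_mul]
  exact le_sum_mul_of_mem_stdSimplex hσ h

theorem EU_single_right_le [DecidableEq S2] {σ1 : S1 → ℝ} {σ : S2 → ℝ} {b : S2}
    (hσ : σ ∈ stdSimplex ℝ S2)
    (h : ∀ b', ∑ a, σ1 a * u a b ≤ ∑ a, σ1 a * u a b') :
    EU u σ1 (Pi.single b 1) ≤ EU u σ1 σ := by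
  rw [EU_eq_sum_right, EU_eq_sum_right, sum_single_mul]
  exact le_sum_mul_of_mem_stdSimplex hσ h

/-- Indifference of the column player against `σ1` makes every `ρ2` a best reply. -/
theorem IsNash.isSafeEq_zero_of_indifferent {σ1 : S1 → ℝ} {σ2 τ2 ρ2 : S2 → ℝ} {τ1 : S1 → ℝ}
    {ε2 c : ℝ} (hN : IsNash u1 u2 σ1 σ2) (h2 : ∀ b, ∑ a, σ1 a * u2 a b = c)
    (hτ1 : τ1 ∈ stdSimplex ℝ S1) (hτ1min : ∀ σ ∈ stdSimplex ℝ S1, EU u2 τ1 σ2 ≤ EU u2 σ σ2)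
    (hτ2 : τ2 ∈ stdSimplex ℝ S2) (hτ2min : ∀ σ ∈ stdSimplex ℝ S2, EU u1 σ1 τ2 ≤ EU u1 σ1 σ)
    (hρ2 : ρ2 ∈ stdSimplex ℝ S2) (hσ2 : σ2 = fun s => ε2 * τ2 s + (1 - ε2) * ρ2 s) :
    IsSafeEq u1 u2 0 ε2 σ1 σ2 := by
  refine ⟨τ1, σ1, τ2, ρ2, hτ1, hN.1, hτ2, hρ2, by simp, hσ2, hN.2.2.1, hτ1min,
    fun σ hσ => ?_, hτ2min⟩
  simp only [EU_eq_sum_right, sum_mul_eq_of_mem_stdSimplex hσ h2,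
    sum_mul_eq_of_mem_stdSimplex hρ2 h2, le_refl]

end Games

theorem chicken_nash_mem_stdSimplex : ![(9:ℝ)/10, 1/10] ∈ stdSimplex ℝ (Fin 2) :=
  ⟨fun s => by fin_cases s <;> norm_num, by norm_num [Fin.sum_univ_two]⟩

theorem chickenU1_indifferent (a : Fin 2) :
    ∑ b, ![(9:ℝ)/10, 1/10] b * chickenU1 a b = -1/10 := by
  fin_cases a <;> norm_num [Fin.sum_univ_two, chickenU1]

theorem chickenU2_indifferent (b : Fin 2) :
    ∑ a, ![(9:ℝ)/10, 1/10] a * chickenU2 a b = -1/10 := by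
  fin_cases b <;> norm_num [Fin.sum_univ_two, chickenU2]

theorem chickenU1_straight_le (b : Fin 2) :
    ∑ a, ![(9:ℝ)/10, 1/10] a * chickenU1 a 1 ≤ ∑ a, ![(9:ℝ)/10, 1/10] a * chickenU1 a b := by
  fin_cases b <;> norm_num [Fin.sum_univ_two, chickenU1]

theorem chickenU2_straight_le (a : Fin 2) :
    ∑ b, ![(9:ℝ)/10, 1/10] b * chickenU2 1 b ≤ ∑ b, ![(9:ℝ)/10, 1/10] b * chickenU2 a b := by
  fin_cases a <;> norm_num [Fin.sum_univ_two, chickenU2]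

/-- in Chicken with ε₁ = 0 and ε₂ ∈ [0, 0.1], there is an ε-safe
equilibrium in which player 1 swerves with probability 0.9. -/
theorem chicken_nash_strategy_safe (ε2 : ℝ) (hε2 : ε2 ∈ Set.Icc (0:ℝ) (1/10)) :
    ∃ σ2 ∈ stdSimplex ℝ (Fin 2),
      IsSafeEq chickenU1 chickenU2 0 ε2 ![(9:ℝ)/10, 1/10] σ2 := by
  have hε1 : ε2 < 1 := by linarith [hε2.2]
  have hNash : IsNash chickenU1 chickenU2 ![(9:ℝ)/10, 1/10] ![(9:ℝ)/10, 1/10] :=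
    isNash_of_indifferent chicken_nash_mem_stdSimplex chicken_nash_mem_stdSimplex
      chickenU1_indifferent chickenU2_indifferent
  refine ⟨_, chicken_nash_mem_stdSimplex, hNash.isSafeEq_zero_of_indifferent
    chickenU2_indifferent (single_mem_stdSimplex ℝ 1)
    (fun _ hσ => EU_single_left_le hσ chickenU2_straight_le) (single_mem_stdSimplex ℝ 1)
    (fun _ hσ => EU_single_right_le hσ chickenU1_straight_le)
    (residual_mem_stdSimplex chicken_nash_mem_stdSimplex (b := 1) ?_ hε1)
    (eq_mix_residual _ 1 hε1.ne)⟩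
  simpa using hε2.2
end
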